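/- arXiv:2406.06770 — 2 statements merged into one kernel-verified Lean document; each statement's English description precedes it below -/
import Mathlib

section
/- Let σ > 0 and, for x > 0 and y > 0, let X_∞(x, y) denote the unique z ∈ (0, 1/σ) satisfying z · exp(-σ z) = x · exp(-σ (x + y)). Then X_∞ is differentiable on {(x,y) : x > 0, y > 0} and its partial derivatives are ∂X_∞/∂x = ((1 - σ x)/x) · X_∞/(1 - σ X_∞) and ∂X_∞/∂y = -σ X_∞/(1 - σ X_∞). -/
/-!
`F z = z e^{-σ z}` has derivative `e^{-σ z} (1 - σ z)`, positive on `(0, 1/σ)`, so `F` is injective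
there and has a differentiable local inverse `F⁻¹` at every `X∞(x, y)`. With
`g (x, y) = x e^{-σ (x + y)}`, injectivity forces `X∞ = F⁻¹ ∘ g` near every point of the open
quadrant; no a priori continuity of `X∞` is needed. The chain rule then gives
`∂X∞ = ∂g / F'(X∞)`, and `F (X∞) = g` turns this into the stated formulas.
-/

open Filter Topology Set Real

section ImplicitFunction

variable {𝕜 : Type*} [NontriviallyNormedField 𝕜] [CompleteSpace 𝕜]
  {f : 𝕜 → 𝕜} {f' : 𝕜} {s : Set 𝕜}

theorem HasStrictDerivAt.eventuallyEq_localInverse_comp {E : Type*} [TopologicalSpace E]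
    {X g : E → 𝕜} {p₀ : E} (hf : HasStrictDerivAt f f' (X p₀)) (hf' : f' ≠ 0)
    (hs : s ∈ 𝓝 (X p₀)) (hinj : InjOn f s) (hg : ContinuousAt g p₀)
    (hX : ∀ᶠ p in 𝓝 p₀, X p ∈ s ∧ f (X p) = g p) :
    X =ᶠ[𝓝 p₀] hf.localInverse f f' (X p₀) hf' ∘ g := by
  have hg₀ : f (X p₀) = g p₀ := hX.self_of_nhds.2
  have hg' : Tendsto g (𝓝 p₀) (𝓝 (f (X p₀))) := hg₀ ▸ hg
  have hφ₀ : hf.localInverse f f' (X p₀) hf' (f (X p₀)) = X p₀ :=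
    (hf.eventually_left_inverse hf').self_of_nhds
  have hφs : ∀ᶠ p in 𝓝 p₀, hf.localInverse f f' (X p₀) hf' (g p) ∈ s :=
    hg'.eventually ((hf.to_localInverse hf').hasDerivAt.continuousAt.preimage_mem_nhds
      (by rwa [hφ₀]))
  filter_upwards [hX, hg'.eventually (hf.eventually_right_inverse hf'), hφs]
    with p ⟨hXs, hXeq⟩ hright hφgs
  exact hinj hXs hφgs (hXeq.trans hright.symm)

theorem HasStrictDerivAt.hasFDerivAt_of_eventually_apply_eq {E : Type*} [NormedAddCommGroup E]
    [NormedSpace 𝕜 E] {X g : E → 𝕜} {g' : E →L[𝕜] 𝕜} {p₀ : E}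
    (hf : HasStrictDerivAt f f' (X p₀)) (hf' : f' ≠ 0) (hs : s ∈ 𝓝 (X p₀)) (hinj : InjOn f s)
    (hg : HasFDerivAt g g' p₀) (hX : ∀ᶠ p in 𝓝 p₀, X p ∈ s ∧ f (X p) = g p) :
    HasFDerivAt X (f'⁻¹ • g') p₀ := by
  have hg₀ : f (X p₀) = g p₀ := hX.self_of_nhds.2
  exact ((hg₀ ▸ (hf.to_localInverse hf').hasDerivAt).comp_hasFDerivAt p₀ hg).congr_of_eventuallyEq
    (hf.eventuallyEq_localInverse_comp hf' hs hinj hg.continuousAt hX)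

theorem HasStrictDerivAt.hasDerivAt_of_eventually_apply_eq {X g : 𝕜 → 𝕜} {g' p₀ : 𝕜}
    (hf : HasStrictDerivAt f f' (X p₀)) (hf' : f' ≠ 0) (hs : s ∈ 𝓝 (X p₀)) (hinj : InjOn f s)
    (hg : HasDerivAt g g' p₀) (hX : ∀ᶠ p in 𝓝 p₀, X p ∈ s ∧ f (X p) = g p) :
    HasDerivAt X (f'⁻¹ * g') p₀ := by
  have hg₀ : f (X p₀) = g p₀ := hX.self_of_nhds.2
  exact ((hg₀ ▸ (hf.to_localInverse hf').hasDerivAt).comp p₀ hg).congr_of_eventuallyEq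
    (hf.eventuallyEq_localInverse_comp hf' hs hinj hg.continuousAt hX)

end ImplicitFunction

theorem hasStrictDerivAt_mul_exp_neg_mul (σ z : ℝ) :
    HasStrictDerivAt (fun z => z * exp (-σ * z)) (exp (-σ * z) * (1 - σ * z)) z := by
  have := (hasStrictDerivAt_id z).mul ((hasStrictDerivAt_id z).const_mul (-σ)).exp
  exact this.congr_deriv (by simp; ring)

theorem strictMonoOn_mul_exp_neg_mul {σ : ℝ} (hσ : 0 < σ) :
    StrictMonoOn (fun z => z * exp (-σ * z)) (Iic (1 / σ)) := by
  refine strictMonoOn_of_deriv_pos (convex_Iic _) (by fun_prop) fun z hz => ?_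
  rw [interior_Iic, mem_Iio, lt_div_iff₀' hσ] at hz
  rw [(hasStrictDerivAt_mul_exp_neg_mul σ z).hasDerivAt.deriv]
  exact mul_pos (exp_pos _) (sub_pos.2 hz)

theorem hasDerivAt_mul_exp_neg_mul_add_const (σ x y : ℝ) :
    HasDerivAt (fun x' => x' * exp (-σ * (x' + y))) (exp (-σ * (x + y)) * (1 - σ * x)) x := by
  have := (hasDerivAt_id x).mul (((hasDerivAt_id x).add_const y).const_mul (-σ)).exp
  exact this.congr_deriv (by simp; ring)

theorem hasDerivAt_const_mul_exp_neg_mul_const_add (σ x y : ℝ) :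
    HasDerivAt (fun y' => x * exp (-σ * (x + y'))) (x * exp (-σ * (x + y)) * -σ) y := by
  have := ((((hasDerivAt_id y).const_add x).const_mul (-σ)).exp).const_mul x
  exact this.congr_deriv (by simp; ring)

/-- Differentiability and partial derivatives of the asymptotic susceptible fraction
`X∞(x,y)`, characterised as the unique `z ∈ (0, 1/σ)` with `z e^{-σ z} = x e^{-σ (x+y)}`. -/
theorem xinf_partial_derivatives
    (σ : ℝ) (hσ : 0 < σ) (Xinf : ℝ → ℝ → ℝ)
    (hXinf : ∀ x y : ℝ, 0 < x → 0 < y →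
      Xinf x y ∈ Set.Ioo 0 (1 / σ) ∧
      Xinf x y * Real.exp (-σ * Xinf x y) = x * Real.exp (-σ * (x + y))) :
    DifferentiableOn ℝ (fun p : ℝ × ℝ => Xinf p.1 p.2)
      {p : ℝ × ℝ | 0 < p.1 ∧ 0 < p.2} ∧
    ∀ x y : ℝ, 0 < x → 0 < y →
      HasDerivAt (fun x' => Xinf x' y)
        ((1 - σ * x) / x * (Xinf x y / (1 - σ * Xinf x y))) x ∧
      HasDerivAt (fun y' => Xinf x y')
        (-(σ * Xinf x y) / (1 - σ * Xinf x y)) y := by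
  have hinj : InjOn (fun z => z * exp (-σ * z)) (Ioo 0 (1 / σ)) :=
    (strictMonoOn_mul_exp_neg_mul hσ).injOn.mono fun _ hz => hz.2.le
  have hslope : ∀ x y, 0 < x → 0 < y → 0 < 1 - σ * Xinf x y := fun x y hx hy =>
    sub_pos.2 ((lt_div_iff₀' hσ).1 (hXinf x y hx hy).1.2)
  have hF' : ∀ x y, 0 < x → 0 < y → exp (-σ * Xinf x y) * (1 - σ * Xinf x y) ≠ 0 :=
    fun x y hx hy => (mul_pos (exp_pos _) (hslope x y hx hy)).ne'
  have hnhds : ∀ x y, 0 < x → 0 < y → Ioo 0 (1 / σ) ∈ 𝓝 (Xinf x y) :=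
    fun x y hx hy => isOpen_Ioo.mem_nhds (hXinf x y hx hy).1
  refine ⟨fun p hp => ?_, fun x y hx hy => ⟨?_, ?_⟩⟩
  · have hg : DifferentiableAt ℝ (fun p : ℝ × ℝ => p.1 * exp (-σ * (p.1 + p.2))) p := by fun_prop
    exact ((hasStrictDerivAt_mul_exp_neg_mul σ _).hasFDerivAt_of_eventually_apply_eq
      (X := fun p : ℝ × ℝ => Xinf p.1 p.2) (hF' _ _ hp.1 hp.2) (hnhds _ _ hp.1 hp.2) hinj
      hg.hasFDerivAt (eventually_of_mem ((isOpen_Ioi.prod isOpen_Ioi).mem_nhds hp)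
        fun q hq => hXinf q.1 q.2 hq.1 hq.2)).differentiableAt.differentiableWithinAt
  · refine ((hasStrictDerivAt_mul_exp_neg_mul σ _).hasDerivAt_of_eventually_apply_eq
      (X := fun x' => Xinf x' y) (hF' x y hx hy) (hnhds x y hx hy) hinj
      (hasDerivAt_mul_exp_neg_mul_add_const σ x y)
      (eventually_of_mem (Ioi_mem_nhds hx) fun x' hx' => hXinf x' y hx' hy)).congr_deriv ?_
    field_simp [(hslope x y hx hy).ne']
    rw [← neg_mul, ← neg_mul, (hXinf x y hx hy).2]
  · refine ((hasStrictDerivAt_mul_exp_neg_mul σ _).hasDerivAt_of_eventually_apply_eq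
      (X := fun y' => Xinf x y') (hF' x y hx hy) (hnhds x y hx hy) hinj
      (hasDerivAt_const_mul_exp_neg_mul_const_add σ x y)
      (eventually_of_mem (Ioi_mem_nhds hy) fun y' hy' => hXinf x y' hx hy')).congr_deriv ?_
    rw [← (hXinf x y hx hy).2]
    field_simp [(hslope x y hx hy).ne']
end

section
/- Let γ > 0, K > 0, 0 ≤ σ_s < σ_f with σ_s < 1, and let τ, t₁ ∈ ℝ and x₁ with 1/σ_f < x₁ ≤ 1. Define F(t₂) = τ + σ_f (t₂ - t₁)/(σ_s - σ_f) + (γ K (σ_s - σ_f))⁻¹ · ln(1 - γ K (t₂ - t₁)/x₁), and for each t₂ ≥ t₁ with x₂(t₂) := x₁ - γ K (t₂ - t₁) > 1/σ_f and F(t₂) ≥ 0, let (X_{t₂}, Y_{t₂}) be the solution of the SIR system X' = -γ σ_s X Y, Y' = γ σ_s X Y - γ Y with initial data (X_{t₂}(t₂), Y_{t₂}(t₂)) = (x₂(t₂), K). Then the function φ(t₂) = X_{t₂}(t₂ + F(t₂)) is strictly decreasing: for any two such times a < b, φ(a) > φ(b). -/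
/-!
Let `x_a > x_b` be the susceptible fractions at the two starting times; both orbits start at
infected level `K`. The quantity `log X - σ_s (X + Y)` is a first integral of the SIR system, and
as `x ↦ log x - σ_s x` increases on `(0, 1]`, orbit `a` carries the larger invariant. Hence,
wherever the two orbits have the same `X`, orbit `a` has the smaller `Y`, so its `X` decreases
more slowly.

If orbit `a` ends above `x_b` we are done, since `X_b` only decreases. Otherwise orbit `a` reaches
the level `x_b` at some time `t₀`, and since `X' ≥ -γ σ_s K` this takes time at least
`(b - a) / σ_s`. The explicit formula for `F` gives `σ_s (F a - F b) < b - a`, so orbit `a` spends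
strictly less time below `x_b` than orbit `b`; comparing the two orbits from the level `x_b` on,
`X_b` ends strictly lower.
-/

open Set

theorem HasDerivWithinAt.Ici_of_Icc {f : ℝ → ℝ} {f' c d x : ℝ}
    (h : HasDerivWithinAt f f' (Icc c d) x) (hx : x ∈ Ico c d) :
    HasDerivWithinAt f f' (Ici x) x :=
  h.mono_of_mem_nhdsWithin (Icc_mem_nhdsGE_of_mem hx)

theorem pos_of_hasDerivWithinAt_mul_self {f g : ℝ → ℝ} {c d : ℝ}
    (hg : ContinuousOn g (Icc c d))
    (hf : ∀ s ∈ Icc c d, HasDerivWithinAt f (g s * f s) (Icc c d) s) (hc : 0 < f c) :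
    ∀ t ∈ Icc c d, 0 < f t := by
  obtain ⟨M, hM⟩ := isCompact_Icc.exists_bound_of_continuousOn hg
  -- `f` decays at rate at most `M`, so it stays above a solution decaying at rate `M + 1`.
  set B : ℝ → ℝ := fun t => f c / 2 * Real.exp (-(M + 1) * (t - c))
  have hB_pos : ∀ t, 0 < B t := fun t => by positivity
  have hB (t : ℝ) : HasDerivAt B (-(M + 1) * B t) t :=
    ((((hasDerivAt_id' t).sub_const c).const_mul (-(M + 1))).exp.const_mul (f c / 2)).congr_deriv
      (by simp only [B]; ring)
  have hBf : ∀ t ∈ Icc c d, B t ≤ f t := by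
    refine image_le_of_deriv_right_lt_deriv_boundary'
      (fun t _ => (hB t).continuousAt.continuousWithinAt) (fun t _ => (hB t).hasDerivWithinAt) ?_
      (fun t ht => (hf t ht).continuousWithinAt)
      (fun t ht => (hf t (Ico_subset_Icc_self ht)).Ici_of_Icc ht) fun t ht hBt => ?_
    · simp only [B, sub_self, mul_zero, Real.exp_zero, mul_one]; linarith
    · have := abs_le.mp ((Real.norm_eq_abs _).symm.trans_le (hM t (Ico_subset_Icc_self ht)))
      rw [← hBt]
      nlinarith [hB_pos t]
  exact fun t ht => (hB_pos t).trans_le (hBf t ht)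

theorem sub_le_log_sub_log {x y : ℝ} (hy : 0 < y) (hyx : y ≤ x) (hx : x ≤ 1) :
    x - y ≤ Real.log x - Real.log y := by
  have hx0 := hy.trans_le hyx
  have h := Real.one_sub_inv_le_log_of_pos (div_pos hx0 hy)
  rw [Real.log_div hx0.ne' hy.ne', inv_div] at h
  have : x - y ≤ 1 - y / x := by
    rw [one_sub_div hx0.ne', le_div_iff₀ hx0]
    nlinarith
  linarith

noncomputable def sirInvariant (σ x y : ℝ) : ℝ := Real.log x - σ * (x + y)

theorem sirInvariant_lt_sirInvariant {σ x y z : ℝ} (hσ : σ < 1) (hy : 0 < y) (hyx : y < x)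
    (hx : x ≤ 1) : sirInvariant σ y z < sirInvariant σ x z := by
  have := sub_le_log_sub_log hy hyx.le hx
  unfold sirInvariant
  nlinarith

structure IsSIRSolutionOn (γ σ : ℝ) (X Y : ℝ → ℝ) (c d : ℝ) : Prop where
  hasDerivWithinAt_fst : ∀ s ∈ Icc c d, HasDerivWithinAt X (-γ * σ * X s * Y s) (Icc c d) s
  hasDerivWithinAt_snd :
    ∀ s ∈ Icc c d, HasDerivWithinAt Y (γ * σ * X s * Y s - γ * Y s) (Icc c d) s

namespace IsSIRSolutionOn

variable {γ σ c d : ℝ} {X Y : ℝ → ℝ}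

theorem continuousOn_fst (h : IsSIRSolutionOn γ σ X Y c d) : ContinuousOn X (Icc c d) :=
  fun s hs => (h.hasDerivWithinAt_fst s hs).continuousWithinAt

theorem continuousOn_snd (h : IsSIRSolutionOn γ σ X Y c d) : ContinuousOn Y (Icc c d) :=
  fun s hs => (h.hasDerivWithinAt_snd s hs).continuousWithinAt

theorem mono {c' d' : ℝ} (h : IsSIRSolutionOn γ σ X Y c d) (hc : c ≤ c') (hd : d' ≤ d) :
    IsSIRSolutionOn γ σ X Y c' d' where
  hasDerivWithinAt_fst s hs :=
    (h.hasDerivWithinAt_fst s (Icc_subset_Icc hc hd hs)).mono (Icc_subset_Icc hc hd)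
  hasDerivWithinAt_snd s hs :=
    (h.hasDerivWithinAt_snd s (Icc_subset_Icc hc hd hs)).mono (Icc_subset_Icc hc hd)

theorem comp_add_const {e : ℝ} (h : IsSIRSolutionOn γ σ X Y (c + e) (d + e)) :
    IsSIRSolutionOn γ σ (fun t => X (t + e)) (fun t => Y (t + e)) c d := by
  have hmaps : MapsTo (· + e) (Icc c d) (Icc (c + e) (d + e)) :=
    fun s hs => ⟨add_le_add_left hs.1 e, add_le_add_left hs.2 e⟩
  have hshift (s : ℝ) : HasDerivWithinAt (· + e) 1 (Icc c d) s :=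
    ((hasDerivAt_id s).add_const e).hasDerivWithinAt
  constructor <;> intro s hs
  · simpa [Function.comp_def] using
      (h.hasDerivWithinAt_fst _ (hmaps hs)).comp s (hshift s) hmaps
  · simpa [Function.comp_def] using
      (h.hasDerivWithinAt_snd _ (hmaps hs)).comp s (hshift s) hmaps

theorem fst_pos (h : IsSIRSolutionOn γ σ X Y c d) (hX : 0 < X c) : ∀ t ∈ Icc c d, 0 < X t :=
  pos_of_hasDerivWithinAt_mul_self (g := fun s => -γ * σ * Y s)
    (continuousOn_const.mul h.continuousOn_snd)
    (fun s hs => (h.hasDerivWithinAt_fst s hs).congr_deriv (by ring)) hX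

theorem snd_pos (h : IsSIRSolutionOn γ σ X Y c d) (hY : 0 < Y c) : ∀ t ∈ Icc c d, 0 < Y t :=
  pos_of_hasDerivWithinAt_mul_self (g := fun s => γ * (σ * X s - 1))
    (continuousOn_const.mul ((continuousOn_const.mul h.continuousOn_fst).sub continuousOn_const))
    (fun s hs => (h.hasDerivWithinAt_snd s hs).congr_deriv (by ring)) hY


theorem antitoneOn_fst (h : IsSIRSolutionOn γ σ X Y c d) (hγ : 0 ≤ γ) (hσ : 0 ≤ σ)
    (hX : 0 < X c) (hY : 0 < Y c) : AntitoneOn X (Icc c d) :=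
  antitoneOn_of_hasDerivWithinAt_nonpos (convex_Icc c d) h.continuousOn_fst
    (fun s hs => (h.hasDerivWithinAt_fst s (interior_subset hs)).mono interior_subset)
    fun s hs => by
      have := mul_pos (h.fst_pos hX s (interior_subset hs)) (h.snd_pos hY s (interior_subset hs))
      nlinarith [mul_nonneg hγ hσ]

theorem strictAntiOn_fst (h : IsSIRSolutionOn γ σ X Y c d) (hγ : 0 < γ) (hσ : 0 < σ)
    (hX : 0 < X c) (hY : 0 < Y c) : StrictAntiOn X (Icc c d) :=
  strictAntiOn_of_hasDerivWithinAt_neg (convex_Icc c d) h.continuousOn_fst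
    (fun s hs => (h.hasDerivWithinAt_fst s (interior_subset hs)).mono interior_subset)
    fun s hs => by
      have := mul_pos (h.fst_pos hX s (interior_subset hs)) (h.snd_pos hY s (interior_subset hs))
      nlinarith [mul_pos hγ hσ]

theorem antitoneOn_snd (h : IsSIRSolutionOn γ σ X Y c d) (hγ : 0 ≤ γ) (hσ : 0 ≤ σ)
    (hX : 0 < X c) (hY : 0 < Y c) (hσX : σ * X c ≤ 1) : AntitoneOn Y (Icc c d) :=
  antitoneOn_of_hasDerivWithinAt_nonpos (convex_Icc c d) h.continuousOn_snd
    (fun s hs => (h.hasDerivWithinAt_snd s (interior_subset hs)).mono interior_subset)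
    fun s hs => by
      have hs' := interior_subset hs
      have hXs : X s ≤ X c :=
        h.antitoneOn_fst hγ hσ hX hY (left_mem_Icc.2 (hs'.1.trans hs'.2)) hs' hs'.1
      have := h.snd_pos hY s hs'
      nlinarith [mul_le_mul_of_nonneg_left hXs hσ, mul_nonneg hγ this.le]

/-- Along the epidemic, `X' ≥ -γ σ Y(c)` because `X Y ≤ Y(c)`. -/
theorem sub_mul_le_fst (h : IsSIRSolutionOn γ σ X Y c d) (hγ : 0 ≤ γ) (hσ : 0 ≤ σ) (hσ1 : σ ≤ 1)
    (hX : 0 < X c) (hX1 : X c ≤ 1) (hY : 0 < Y c) :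
    ∀ t ∈ Icc c d, X c - γ * σ * Y c * (t - c) ≤ X t := by
  have hXY : ∀ s ∈ Icc c d, X s * Y s ≤ Y c := fun s hs => by
    have hXs := h.antitoneOn_fst hγ hσ hX hY (left_mem_Icc.2 (hs.1.trans hs.2)) hs hs.1
    have hYs :=
      h.antitoneOn_snd hγ hσ hX hY (by nlinarith) (left_mem_Icc.2 (hs.1.trans hs.2)) hs hs.1
    nlinarith [h.fst_pos hX s hs, h.snd_pos hY s hs]
  refine image_le_of_deriv_right_le_deriv_boundary (f := fun t => X c - γ * σ * Y c * (t - c))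
    (f' := fun _ => -(γ * σ * Y c)) (by fun_prop)
    (fun t _ => ?_) (by simp) h.continuousOn_fst
    (fun t ht => (h.hasDerivWithinAt_fst t (Ico_subset_Icc_self ht)).Ici_of_Icc ht)
    fun t ht => by nlinarith [hXY t (Ico_subset_Icc_self ht), mul_nonneg hγ hσ]
  simpa using
    (((hasDerivAt_id' t).sub_const c).const_mul (γ * σ * Y c)).hasDerivWithinAt.const_sub (X c)

theorem sirInvariant_eq (h : IsSIRSolutionOn γ σ X Y c d) (hX : 0 < X c) :
    ∀ t ∈ Icc c d, sirInvariant σ (X t) (Y t) = sirInvariant σ (X c) (Y c) := by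
  have hpos := h.fst_pos hX
  refine constant_of_has_deriv_right_zero
    ((h.continuousOn_fst.log fun t ht => (hpos t ht).ne').sub
      (continuousOn_const.mul (h.continuousOn_fst.add h.continuousOn_snd))) fun t ht => ?_
  have ht' := Ico_subset_Icc_self ht
  have hX' := h.hasDerivWithinAt_fst t ht'
  have hderiv :=
    (hX'.log (hpos t ht').ne').sub ((hX'.add (h.hasDerivWithinAt_snd t ht')).const_mul σ)
  refine (hderiv.Ici_of_Icc ht).congr_deriv ?_
  field_simp [(hpos t ht').ne']
  ring

theorem fst_le_fst_of_sirInvariant_lt {X₁ Y₁ X₂ Y₂ : ℝ → ℝ}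
    (h₁ : IsSIRSolutionOn γ σ X₁ Y₁ c d) (h₂ : IsSIRSolutionOn γ σ X₂ Y₂ c d) (hγ : 0 < γ)
    (hX₂ : 0 < X₂ c) (hX : X₂ c ≤ X₁ c)
    (hV : sirInvariant σ (X₂ c) (Y₂ c) < sirInvariant σ (X₁ c) (Y₁ c)) :
    ∀ t ∈ Icc c d, X₂ t ≤ X₁ t := by
  have hV₁ := h₁.sirInvariant_eq (hX₂.trans_le hX)
  have hV₂ := h₂.sirInvariant_eq hX₂
  refine image_le_of_deriv_right_lt_deriv_boundary' h₂.continuousOn_fst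
    (fun t ht => (h₂.hasDerivWithinAt_fst t (Ico_subset_Icc_self ht)).Ici_of_Icc ht) hX
    h₁.continuousOn_fst
    (fun t ht => (h₁.hasDerivWithinAt_fst t (Ico_subset_Icc_self ht)).Ici_of_Icc ht)
    fun t ht heq => ?_
  have ht' := Ico_subset_Icc_self ht
  -- where the two orbits meet in `X`, the one with the larger invariant has the smaller `Y`
  have hY : σ * Y₁ t < σ * Y₂ t := by
    have e₁ := hV₁ t ht'
    have e₂ := hV₂ t ht'
    rw [heq] at e₂
    unfold sirInvariant at e₁ e₂ hV
    linarith
  have := mul_lt_mul_of_pos_left hY (mul_pos hγ (h₂.fst_pos hX₂ t ht'))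
  rw [← heq]
  linarith

theorem fst_lt_fst_of_sirInvariant_lt {X₁ Y₁ X₂ Y₂ : ℝ → ℝ} {c₁ d₁ c₂ d₂ : ℝ}
    (h₁ : IsSIRSolutionOn γ σ X₁ Y₁ c₁ d₁) (h₂ : IsSIRSolutionOn γ σ X₂ Y₂ c₂ d₂) (hγ : 0 < γ)
    (hσ : 0 < σ) (hcd₁ : c₁ ≤ d₁) (hd : d₁ - c₁ < d₂ - c₂) (hX₂ : 0 < X₂ c₂) (hY₂ : 0 < Y₂ c₂)
    (hX : X₂ c₂ ≤ X₁ c₁)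
    (hV : sirInvariant σ (X₂ c₂) (Y₂ c₂) < sirInvariant σ (X₁ c₁) (Y₁ c₁)) :
    X₂ d₂ < X₁ d₁ := by
  have h₁' : IsSIRSolutionOn γ σ (fun t => X₁ (t + (c₁ - c₂))) (fun t => Y₁ (t + (c₁ - c₂)))
      c₂ (c₂ + (d₁ - c₁)) :=
    (h₁.mono (by linarith) (by linarith)).comp_add_const
  have hle := h₁'.fst_le_fst_of_sirInvariant_lt (h₂.mono le_rfl (by linarith)) hγ hX₂
    (by simpa using hX) (by simpa using hV) (c₂ + (d₁ - c₁)) (right_mem_Icc.2 (by linarith))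
  calc X₂ d₂ < X₂ (c₂ + (d₁ - c₁)) :=
        h₂.strictAntiOn_fst hγ hσ hX₂ hY₂ ⟨by linarith, by linarith⟩
          (right_mem_Icc.2 (by linarith)) (by linarith)
    _ ≤ X₁ (c₂ + (d₁ - c₁) + (c₁ - c₂)) := hle
    _ = X₁ d₁ := by ring_nf

end IsSIRSolutionOn

theorem mul_duration_sub_lt {γ K σs σf τ t₁ x₁ a b : ℝ} {F : ℝ → ℝ} (hγK : 0 < γ * K)
    (hσs : 0 ≤ σs) (hσsf : σs < σf) (hσs1 : σs < 1) (hx₁ : 0 < x₁)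
    (hF : ∀ t₂, F t₂ = τ + σf * (t₂ - t₁) / (σs - σf)
      + (γ * K * (σs - σf))⁻¹ * Real.log (1 - γ * K * (t₂ - t₁) / x₁))
    (hab : a < b) (hxa : x₁ - γ * K * (a - t₁) ≤ 1) (hxb : 0 < x₁ - γ * K * (b - t₁)) :
    σs * (F a - F b) < b - a := by
  have hlog (t : ℝ) (ht : 0 < x₁ - γ * K * (t - t₁)) : Real.log (1 - γ * K * (t - t₁) / x₁) =
      Real.log (x₁ - γ * K * (t - t₁)) - Real.log x₁ := by
    rw [← Real.log_div ht.ne' hx₁.ne', sub_div, div_self hx₁.ne']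
  have hxab : x₁ - γ * K * (b - t₁) < x₁ - γ * K * (a - t₁) := by nlinarith
  have hΛ := sub_le_log_sub_log hxb hxab.le hxa
  have hdiff : (σf - σs) * (F a - F b) = σf * (b - a) - (Real.log (x₁ - γ * K * (a - t₁))
      - Real.log (x₁ - γ * K * (b - t₁))) / (γ * K) := by
    rw [hF, hF, hlog a (hxb.trans hxab), hlog b hxb]
    field_simp [(sub_neg.2 hσsf).ne, hγK.ne']
    ring
  have hba : b - a ≤ (Real.log (x₁ - γ * K * (a - t₁))
      - Real.log (x₁ - γ * K * (b - t₁))) / (γ * K) := by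
    rw [le_div_iff₀ hγK]
    linarith
  refine lt_of_mul_lt_mul_left (a := σf - σs) ?_ (sub_pos.2 hσsf).le
  calc (σf - σs) * (σs * (F a - F b))
      = σs * (σf * (b - a) - (Real.log (x₁ - γ * K * (a - t₁))
        - Real.log (x₁ - γ * K * (b - t₁))) / (γ * K)) := by rw [← hdiff]; ring
    _ ≤ σs * (σf * (b - a) - (b - a)) := by gcongr
    _ < (σf - σs) * (b - a) := by
      nlinarith [mul_pos (mul_pos (hσs.trans_lt hσsf) (sub_pos.2 hσs1)) (sub_pos.2 hab)]

theorem end_susceptible_strictly_decreasing_general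
    (γ K σs σf τ t₁ x₁ : ℝ) (hγ : 0 < γ) (hK : 0 < K)
    (hσs : 0 ≤ σs) (hσsf : σs < σf) (hσs1 : σs < 1)
    (hx₁ : 1 / σf < x₁) (hx₁le : x₁ ≤ 1)
    (F : ℝ → ℝ)
    (hF : ∀ t₂, F t₂ = τ + σf * (t₂ - t₁) / (σs - σf)
      + (γ * K * (σs - σf))⁻¹ * Real.log (1 - γ * K * (t₂ - t₁) / x₁))
    (a b : ℝ) (hab : a < b) (ht₁a : t₁ ≤ a)
    (hFa : 0 ≤ F a)
    (hxb : 1 / σf < x₁ - γ * K * (b - t₁)) (hFb : 0 ≤ F b)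
    (Xa Ya Xb Yb : ℝ → ℝ)
    (hXa : ∀ s ∈ Icc a (a + F a),
      HasDerivWithinAt Xa (-γ * σs * Xa s * Ya s) (Icc a (a + F a)) s)
    (hYa : ∀ s ∈ Icc a (a + F a),
      HasDerivWithinAt Ya (γ * σs * Xa s * Ya s - γ * Ya s) (Icc a (a + F a)) s)
    (hXa0 : Xa a = x₁ - γ * K * (a - t₁)) (hYa0 : Ya a = K)
    (hXb : ∀ s ∈ Icc b (b + F b),
      HasDerivWithinAt Xb (-γ * σs * Xb s * Yb s) (Icc b (b + F b)) s)
    (hYb : ∀ s ∈ Icc b (b + F b),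
      HasDerivWithinAt Yb (γ * σs * Xb s * Yb s - γ * Yb s) (Icc b (b + F b)) s)
    (hXb0 : Xb b = x₁ - γ * K * (b - t₁)) (hYb0 : Yb b = K) :
    Xb (b + F b) < Xa (a + F a) := by
  have ha : IsSIRSolutionOn γ σs Xa Ya a (a + F a) := ⟨hXa, hYa⟩
  have hb : IsSIRSolutionOn γ σs Xb Yb b (b + F b) := ⟨hXb, hYb⟩
  have hxb0 : 0 < Xb b := hXb0 ▸ (one_div_pos.2 (hσs.trans_lt hσsf)).trans hxb
  have hxab : Xb b < Xa a := by rw [hXa0, hXb0]; nlinarith [mul_pos hγ hK]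
  have hxa1 : Xa a ≤ 1 := by rw [hXa0]; nlinarith [mul_pos hγ hK]
  by_cases hend : Xb b < Xa (a + F a)
  · exact (hb.antitoneOn_fst hγ.le hσs hxb0 (hYb0 ▸ hK) (left_mem_Icc.2 (by linarith))
      (right_mem_Icc.2 (by linarith)) (by linarith)).trans_lt hend
  -- otherwise orbit `a` passes through the initial susceptible level of orbit `b` at some `t₀`
  obtain ⟨t₀, ht₀, hXat₀⟩ : ∃ t₀ ∈ Icc a (a + F a), Xa t₀ = Xb b :=
    intermediate_value_Icc' (by linarith) ha.continuousOn_fst ⟨not_lt.1 hend, hxab.le⟩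
  have hlin := ha.sub_mul_le_fst hγ.le hσs hσs1.le (hxb0.trans hxab) hxa1 (hYa0 ▸ hK) t₀ ht₀
  have hσt₀ : b - a ≤ σs * (t₀ - a) := by
    rw [hXat₀, hXa0, hXb0, hYa0] at hlin
    exact le_of_mul_le_mul_left (by linarith) (mul_pos hγ hK)
  have hσ : 0 < σs := pos_of_mul_pos_left (b := t₀ - a) (by linarith) (by linarith [ht₀.1])
  have hdur := mul_duration_sub_lt (mul_pos hγ hK) hσs hσsf hσs1
    ((one_div_pos.2 (hσs.trans_lt hσsf)).trans hx₁) hF hab (hXa0 ▸ hxa1) (hXb0 ▸ hxb0)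
  have hV : sirInvariant σs (Xb b) (Yb b) < sirInvariant σs (Xa t₀) (Ya t₀) := by
    rw [ha.sirInvariant_eq (hxb0.trans hxab) t₀ ht₀, hYa0, hYb0]
    exact sirInvariant_lt_sirInvariant hσs1 hxb0 hxab hxa1
  exact (ha.mono ht₀.1 le_rfl).fst_lt_fst_of_sirInvariant_lt hb hγ hσ ht₀.2
    (lt_of_mul_lt_mul_left (by linarith) hσs) hxb0 (hYb0 ▸ hK) hXat₀.ge hV

/-- The susceptible fraction at the end of the strict quarantine of maximal duration
`F(t₂)` started at time `t₂` (with initial data `(x₁ - γ K (t₂ - t₁), K)` and dynamics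
given by the SIR system with reproduction number `σ_s`) is strictly decreasing in `t₂`:
for admissible times `a < b`, `φ(a) > φ(b)`. -/
theorem end_susceptible_strictly_decreasing
    (γ K σs σf τ t₁ x₁ : ℝ) (hγ : 0 < γ) (hK : 0 < K)
    (hσs : 0 ≤ σs) (hσsf : σs < σf) (hσs1 : σs < 1)
    (hx₁ : 1 / σf < x₁) (hx₁le : x₁ ≤ 1)
    (F : ℝ → ℝ)
    (hF : ∀ t₂, F t₂ = τ + σf * (t₂ - t₁) / (σs - σf)
      + (γ * K * (σs - σf))⁻¹ * Real.log (1 - γ * K * (t₂ - t₁) / x₁))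
    (a b : ℝ) (hab : a < b) (ht₁a : t₁ ≤ a)
    (hxa : 1 / σf < x₁ - γ * K * (a - t₁)) (hFa : 0 ≤ F a)
    (hxb : 1 / σf < x₁ - γ * K * (b - t₁)) (hFb : 0 ≤ F b)
    (Xa Ya Xb Yb : ℝ → ℝ)
    (hXa : ∀ s ∈ Icc a (a + F a),
      HasDerivWithinAt Xa (-γ * σs * Xa s * Ya s) (Icc a (a + F a)) s)
    (hYa : ∀ s ∈ Icc a (a + F a),
      HasDerivWithinAt Ya (γ * σs * Xa s * Ya s - γ * Ya s) (Icc a (a + F a)) s)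
    (hXa0 : Xa a = x₁ - γ * K * (a - t₁)) (hYa0 : Ya a = K)
    (hXb : ∀ s ∈ Icc b (b + F b),
      HasDerivWithinAt Xb (-γ * σs * Xb s * Yb s) (Icc b (b + F b)) s)
    (hYb : ∀ s ∈ Icc b (b + F b),
      HasDerivWithinAt Yb (γ * σs * Xb s * Yb s - γ * Yb s) (Icc b (b + F b)) s)
    (hXb0 : Xb b = x₁ - γ * K * (b - t₁)) (hYb0 : Yb b = K) :
    Xb (b + F b) < Xa (a + F a) :=
  end_susceptible_strictly_decreasing_general γ K σs σf τ t₁ x₁ hγ hK hσs hσsf hσs1 hx₁ hx₁le F hF a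
    b hab ht₁a hFa hxb hFb Xa Ya Xb Yb hXa hYa hXa0 hYa0 hXb hYb hXb0 hYb0
end
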